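/- Let (A, [·,·], ∧) be a Gerstenhaber algebra, E the graded vector space with E_{−k} := A^k, and 𝒩_k the symmetric vector valued k-form 𝒩_k(P_1,…,P_k) := P_1∧⋯∧P_k. Then for all positive integers i, j: [𝒩_i, 𝒩_j]_RN = ((j−i)(i+j−1)!/(i!·j!)) 𝒩_{i+j−1}. -/

import Mathlib

open Finset

section Framework

variable {V : Type*} [AddCommGroup V] [Module ℝ V]

/-- The Koszul sign `ε(σ)` of a permutation `σ` acting on homogeneous elements whose
degrees are given by `d`. -/
def koszulSign {n : ℕ} (d : Fin n → ℤ) (σ : Equiv.Perm (Fin n)) : ℤ :=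
  ∏ p ∈ Finset.univ.filter (fun p : Fin n × Fin n => p.1 < p.2 ∧ σ p.2 < σ p.1),
    (-1 : ℤ) ^ (d (σ p.1) * d (σ p.2)).natAbs

/-- The `(k, n-k)`-unshuffles: permutations of `Fin n` which are increasing on the
first `k` indices and on the remaining ones. -/
def unshuffles (k n : ℕ) : Finset (Equiv.Perm (Fin n)) :=
  Finset.univ.filter (fun σ =>
    (∀ i j : Fin n, i < j → (j : ℕ) < k → σ i < σ j) ∧
    (∀ i j : Fin n, i < j → k ≤ (i : ℕ) → σ i < σ j))

/-- A (raw) vector valued `k`-form on the graded vector space with grading `𝒢`: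
it assigns, to homogeneous elements of degrees `d 0, …, d (k-1)`, an element of `V`. -/
abbrev GForm (𝒢 : ℤ → Submodule ℝ V) (k : ℕ) : Type _ :=
  (d : Fin k → ℤ) → ((i : Fin k) → 𝒢 (d i)) → V

/-- Transport of a vector valued form along an equality of arities. -/
def castForm {𝒢 : ℤ → Submodule ℝ V} {m n : ℕ} (h : m = n) (K : GForm 𝒢 m) : GForm 𝒢 n :=
  h ▸ K

variable (𝒢 : ℤ → Submodule ℝ V)

/-- Projection on the homogeneous component of degree `i`. -/
def prj [DirectSum.Decomposition 𝒢] (i : ℤ) (v : V) : 𝒢 i :=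
  DirectSum.decompose 𝒢 v i

/-- Insertion of a `k`-form `K` of degree `δK` into an `(l+1)`-form `L`:
`ι_K L (X_1,…,X_{k+l}) = Σ_{σ ∈ Sh(k,l)} ε(σ) L(K(X_{σ(1)},…,X_{σ(k)}), X_{σ(k+1)},…)`. -/
def insertPos [DirectSum.Decomposition 𝒢] {k l : ℕ} (δK : ℤ) (K : GForm 𝒢 k)
    (L : GForm 𝒢 (l + 1)) : GForm 𝒢 (k + l) := fun d x =>
  ∑ σ ∈ unshuffles k (k + l),
    koszulSign d σ •
      L (Fin.cons ((∑ i : Fin k, d (σ (Fin.castAdd l i))) + δK)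
          (fun j : Fin l => d (σ (Fin.natAdd k j))))
        (Fin.cons
          (prj 𝒢 ((∑ i : Fin k, d (σ (Fin.castAdd l i))) + δK)
            (K (fun i => d (σ (Fin.castAdd l i))) (fun i => x (σ (Fin.castAdd l i)))))
          (fun j : Fin l => x (σ (Fin.natAdd k j))))

/-- Insertion operator `ι_K L` of a `k`-form of degree `δK` into an `l`-form. -/
def insertionOp [DirectSum.Decomposition 𝒢] {k l : ℕ} (δK : ℤ) (K : GForm 𝒢 k) :
    GForm 𝒢 l → GForm 𝒢 (k + l - 1) :=
  match l with
  | 0 => fun _ => fun _ _ => 0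
  | _ + 1 => fun L => insertPos 𝒢 δK K L

/-- A formal sum of vector valued forms of all arities. -/
abbrev MultiForm : Type _ := (k : ℕ) → GForm 𝒢 k

/-- A single `k`-form seen as a formal sum concentrated in arity `k`. -/
def singleF (k : ℕ) (K : GForm 𝒢 k) : MultiForm 𝒢 :=
  fun n => if h : n = k then castForm h.symm K else 0

/-- The Richardson–Nijenhuis bracket `[K,L] = ι_K L - (-1)^{K̄ L̄} ι_L K` of formal
sums of forms `K` (of degree `δK`) and `L` (of degree `δL`), computed aritywise. -/
def rnBracketM [DirectSum.Decomposition 𝒢] (δK δL : ℤ) (K L : MultiForm 𝒢) : MultiForm 𝒢 :=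
  fun n =>
    (∑ p ∈ (Finset.range (n + 2)).attach,
      castForm (by have := Finset.mem_range.mp p.2; omega)
        (insertionOp 𝒢 δK (K p.1) (L (n + 1 - p.1))))
    - ((-1 : ℤ) ^ (δK * δL).natAbs) •
      (∑ p ∈ (Finset.range (n + 2)).attach,
        castForm (by have := Finset.mem_range.mp p.2; omega)
          (insertionOp 𝒢 δL (L p.1) (K (n + 1 - p.1))))

/-- `K` is a graded symmetric vector valued `k`-form of degree `δ`. -/
structure IsSymFormOfDeg {k : ℕ} (δ : ℤ) (K : GForm 𝒢 k) : Prop where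
  mem_grading : ∀ (d : Fin k → ℤ) (x : (i : Fin k) → 𝒢 (d i)), K d x ∈ 𝒢 ((∑ i, d i) + δ)
  map_add : ∀ (d : Fin k → ℤ) (x : (i : Fin k) → 𝒢 (d i)) (i : Fin k) (a b : 𝒢 (d i)),
    K d (Function.update x i (a + b)) = K d (Function.update x i a) + K d (Function.update x i b)
  map_smul : ∀ (d : Fin k → ℤ) (x : (i : Fin k) → 𝒢 (d i)) (i : Fin k) (c : ℝ) (a : 𝒢 (d i)),
    K d (Function.update x i (c • a)) = c • K d (Function.update x i a)
  symm : ∀ (d : Fin k → ℤ) (σ : Equiv.Perm (Fin k)) (x : (i : Fin k) → 𝒢 (d i)),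
    K (d ∘ σ) (fun i => x (σ i)) = koszulSign d σ • K d x

/-- The `L_∞` identities for a family `(l_i)` of symmetric vector valued forms of degree 1:
for each `n`, `Σ_{i+j=n+1} Σ_{σ ∈ Sh(i,j-1)} ε(σ) l_j (l_i (X_σ(1),…), X_…) = 0`. -/
def LInftyIdentity [DirectSum.Decomposition 𝒢] (l : MultiForm 𝒢) : Prop :=
  ∀ n : ℕ,
    (∑ p ∈ (Finset.range (n + 2)).attach,
      castForm (by have := Finset.mem_range.mp p.2; omega)
        (insertionOp 𝒢 1 (l p.1) (l (n + 1 - p.1)))) = (0 : GForm 𝒢 n)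

end Framework

section Gerstenhaber

variable {V : Type*} [AddCommGroup V] [Module ℝ V]

/-- A Gerstenhaber algebra structure on a graded vector space `(V, 𝒜)`: a graded
commutative associative product `wedge` together with a graded Lie bracket on the
shifted space which is a degree `i` derivation in each argument. -/
structure Gerstenhaber (𝒜 : ℤ → Submodule ℝ V) : Type _ where
  wedge : V →ₗ[ℝ] V →ₗ[ℝ] V
  bracket : V →ₗ[ℝ] V →ₗ[ℝ] V
  wedge_mem : ∀ (i j : ℤ) (x y : V), x ∈ 𝒜 i → y ∈ 𝒜 j → wedge x y ∈ 𝒜 (i + j)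
  bracket_mem : ∀ (i j : ℤ) (x y : V), x ∈ 𝒜 i → y ∈ 𝒜 j → bracket x y ∈ 𝒜 (i + j - 1)
  wedge_assoc : ∀ x y z, wedge (wedge x y) z = wedge x (wedge y z)
  wedge_comm : ∀ (i j : ℤ) (x y : V), x ∈ 𝒜 i → y ∈ 𝒜 j →
    wedge x y = ((-1 : ℤ) ^ (i * j).natAbs) • wedge y x
  bracket_antisymm : ∀ (i j : ℤ) (x y : V), x ∈ 𝒜 i → y ∈ 𝒜 j →
    bracket x y = -(((-1 : ℤ) ^ ((i - 1) * (j - 1)).natAbs) • bracket y x)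
  jacobi : ∀ (i j : ℤ) (x y z : V), x ∈ 𝒜 i → y ∈ 𝒜 j →
    bracket x (bracket y z) = bracket (bracket x y) z
      + ((-1 : ℤ) ^ ((i - 1) * (j - 1)).natAbs) • bracket y (bracket x z)
  leibniz : ∀ (i j : ℤ) (x y z : V), x ∈ 𝒜 i → y ∈ 𝒜 j →
    bracket x (wedge y z) = wedge (bracket x y) z
      + ((-1 : ℤ) ^ ((i - 1) * j).natAbs) • wedge y (bracket x z)

variable {𝒜 : ℤ → Submodule ℝ V}

/-- The grading of the graded vector space `E` with `E_{-k} := A^k`. -/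
abbrev negG (𝒜 : ℤ → Submodule ℝ V) : ℤ → Submodule ℝ V := fun i => 𝒜 (-i)

/-- Iterated wedge product of `k+1` elements. -/
def wedgeAll (G : Gerstenhaber 𝒜) : {k : ℕ} → (Fin (k + 1) → V) → V
  | 0, x => x 0
  | _ + 1, x => G.wedge (x 0) (wedgeAll G (fun i => x i.succ))

/-- The symmetric vector valued `k`-form `𝒩_k (P_1, …, P_k) := P_1 ∧ ⋯ ∧ P_k`. -/
def mathcalN (G : Gerstenhaber 𝒜) (𝒢 : ℤ → Submodule ℝ V) : (k : ℕ) → GForm 𝒢 k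
  | 0 => fun _ _ => 0
  | _ + 1 => fun _ x => wedgeAll G (fun i => (x i : V))

/-- The symmetric vector valued 2-form `l_2 (P_1, P_2) := (-1)^{|P_1|} [P_1, P_2]`. -/
def l2G (G : Gerstenhaber 𝒜) (𝒢 : ℤ → Submodule ℝ V) : GForm 𝒢 2 :=
  fun d x => ((-1 : ℤ) ^ (d 0).natAbs) • G.bracket (x 0) (x 1)

/-- The family `l_1 := 0`, `l_2`, and `l_i := ι_{l_2} 𝒩_{i-1}` for `i > 2`. -/
def lFormsG (G : Gerstenhaber 𝒜) (𝒢 : ℤ → Submodule ℝ V) [DirectSum.Decomposition 𝒢] :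
    (i : ℕ) → GForm 𝒢 i
  | 0 => 0
  | 1 => 0
  | 2 => l2G G 𝒢
  | i + 3 => castForm (by omega) (insertionOp 𝒢 1 (l2G G 𝒢) (mathcalN G 𝒢 (i + 2)))

end Gerstenhaber

/-!
Every term of `ι_{𝒩_i} 𝒩_j (P_1, …, P_{i+j-1})` is `ε(σ) P_{σ(1)} ∧ ⋯ ∧ P_{σ(i+j-1)}` for an
unshuffle `σ`, and graded commutativity of `∧` turns it into `ε(σ)² P_1 ∧ ⋯ ∧ P_{i+j-1}`, so
`ι_{𝒩_i} 𝒩_j = C(i+j-1, i) 𝒩_{i+j-1}`, counting unshuffles. As `𝒩_i, 𝒩_j` have degree `0`, the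
bracket is `(C(i+j-1, i) - C(i+j-1, j)) 𝒩_{i+j-1}`, which is the stated coefficient.
Graded commutativity for arbitrary permutations follows from the case of adjacent transpositions,
which generate the symmetric group.
-/

section Forms

variable {V : Type*} [AddCommGroup V] [Module ℝ V] {𝒢 : ℤ → Submodule ℝ V}

theorem castForm_zero {m n : ℕ} (h : m = n) : castForm h (0 : GForm 𝒢 m) = 0 := by
  cases h; rfl

theorem castForm_castForm {a b c : ℕ} (h₁ : a = b) (h₂ : b = c) (K : GForm 𝒢 a) :
    castForm h₂ (castForm h₁ K) = castForm (h₁.trans h₂) K := by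
  cases h₁; cases h₂; rfl

theorem castForm_smul {M : Type*} [SMulZeroClass M V] {m n : ℕ} (h : m = n) (c : M)
    (K : GForm 𝒢 m) :
    castForm h (c • K) = c • castForm h K := by
  cases h; rfl

theorem singleF_of_eq {k n : ℕ} (K : GForm 𝒢 k) (h : n = k) :
    singleF 𝒢 k K n = castForm h.symm K :=
  dif_pos h

theorem singleF_of_ne {k n : ℕ} (K : GForm 𝒢 k) (h : n ≠ k) : singleF 𝒢 k K n = 0 :=
  dif_neg h

theorem singleF_smul {M : Type*} [SMulZeroClass M V] (k : ℕ) (c : M) (K : GForm 𝒢 k) :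
    singleF 𝒢 k (c • K) = c • singleF 𝒢 k K := by
  funext n
  by_cases h : n = k
  · simp only [singleF_of_eq _ h, castForm_smul, Pi.smul_apply]
  · rw [Pi.smul_apply, singleF_of_ne _ h, singleF_of_ne _ h, smul_zero]

variable [DirectSum.Decomposition 𝒢]

theorem insertionOp_castForm {k m n : ℕ} (δ : ℤ) (K : GForm 𝒢 k) (h : m = n) (L : GForm 𝒢 m) :
    insertionOp 𝒢 δ K (castForm h L) = castForm (by rw [h]) (insertionOp 𝒢 δ K L) := by
  cases h; rfl

theorem insertionOp_zero {k l : ℕ} (δ : ℤ) (K : GForm 𝒢 k) :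
    insertionOp 𝒢 δ K (0 : GForm 𝒢 l) = 0 := by
  cases l with
  | zero => rfl
  | succ l =>
    funext d x
    exact Finset.sum_eq_zero fun σ _ => smul_zero _

variable (𝒢) in
def insertionM (δK : ℤ) (K L : MultiForm 𝒢) : MultiForm 𝒢 := fun n =>
  ∑ p ∈ (Finset.range (n + 2)).attach,
    castForm (by have := Finset.mem_range.mp p.2; omega)
      (insertionOp 𝒢 δK (K p.1) (L (n + 1 - p.1)))

theorem rnBracketM_eq_sub (δK δL : ℤ) (K L : MultiForm 𝒢) :
    rnBracketM 𝒢 δK δL K L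
      = insertionM 𝒢 δK K L - ((-1 : ℤ) ^ (δK * δL).natAbs) • insertionM 𝒢 δL L K :=
  rfl

theorem insertionM_singleF_singleF {a b : ℕ} (hb : 1 ≤ b) (δ : ℤ) (A : GForm 𝒢 a)
    (B : GForm 𝒢 b) (hB : ∀ a', insertionOp 𝒢 δ (0 : GForm 𝒢 a') B = 0) :
    insertionM 𝒢 δ (singleF 𝒢 a A) (singleF 𝒢 b B)
      = singleF 𝒢 (a + b - 1) (insertionOp 𝒢 δ A B) := by
  funext n
  have term_eq_zero : ∀ p : Finset.range (n + 2), ¬((p : ℕ) = a ∧ n + 1 - p = b) →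
      insertionOp 𝒢 δ (singleF 𝒢 a A p) (singleF 𝒢 b B (n + 1 - p)) = 0 := by
    intro p hp
    by_cases hpb : n + 1 - (p : ℕ) = b
    · rw [singleF_of_ne A fun hpa => hp ⟨hpa, hpb⟩, singleF_of_eq B hpb, insertionOp_castForm, hB,
        castForm_zero]
    · rw [singleF_of_ne B hpb, insertionOp_zero]
  by_cases hn : n = a + b - 1
  · have ha : a ∈ Finset.range (n + 2) := Finset.mem_range.mpr (by omega)
    rw [insertionM, Finset.sum_eq_single_of_mem ⟨a, ha⟩ (Finset.mem_attach _ _)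
      fun p _ hp => by rw [term_eq_zero p fun h => hp (Subtype.ext h.1), castForm_zero]]
    rw [singleF_of_eq A rfl, singleF_of_eq B (show n + 1 - a = b by omega), singleF_of_eq _ hn]
    rw [insertionOp_castForm, castForm_castForm]
    rfl
  · rw [singleF_of_ne _ hn]
    refine Finset.sum_eq_zero fun p _ => ?_
    rw [term_eq_zero p (by have := Finset.mem_range.mp p.2; omega), castForm_zero]

end Forms

section KoszulSign

variable {n : ℕ}

theorem koszulSign_one (d : Fin n → ℤ) : koszulSign d 1 = 1 :=
  Finset.prod_eq_one fun _ hp =>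
    absurd (Finset.mem_filter.mp hp).2.2 (Finset.mem_filter.mp hp).2.1.not_gt

theorem koszulSign_mul_self (d : Fin n → ℤ) (σ : Equiv.Perm (Fin n)) :
    koszulSign d σ * koszulSign d σ = 1 := by
  rw [koszulSign, ← Finset.prod_mul_distrib]
  exact Finset.prod_eq_one fun p _ => by rw [← pow_add]; exact Even.neg_one_pow ⟨_, rfl⟩

theorem koszulSign_neg (d : Fin n → ℤ) (σ : Equiv.Perm (Fin n)) :
    koszulSign (-d) σ = koszulSign d σ := by
  simp only [koszulSign, Pi.neg_apply, neg_mul_neg]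

theorem koszulSign_eq_prod_pairs (d : Fin n → ℤ) (σ : Equiv.Perm (Fin n)) :
    koszulSign d σ = ∏ p ∈ Finset.univ.filter (fun p : Fin n × Fin n => p.1 < p.2),
      if σ p.2 < σ p.1 then (-1 : ℤ) ^ (d (σ p.1) * d (σ p.2)).natAbs else 1 := by
  rw [Finset.prod_ite, Finset.prod_const_one, mul_one, Finset.filter_filter]
  rfl

/-- Composing with an adjacent transposition changes only the status of the pair `(i, i+1)`. -/
theorem koszulSign_mul_swap_castSucc_succ (d : Fin (n + 1) → ℤ) (σ : Equiv.Perm (Fin (n + 1)))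
    (i : Fin n) :
    koszulSign d (σ * Equiv.swap i.castSucc i.succ)
      = (-1 : ℤ) ^ (d (σ i.castSucc) * d (σ i.succ)).natAbs * koszulSign d σ := by
  set u := i.castSucc
  set v := i.succ
  set s := Equiv.swap u v
  have hmem : (u, v) ∈ Finset.univ.filter (fun p : Fin (n + 1) × Fin (n + 1) => p.1 < p.2) :=
    Finset.mem_filter.mpr ⟨Finset.mem_univ _, Fin.castSucc_lt_succ⟩
  rw [koszulSign_eq_prod_pairs, koszulSign_eq_prod_pairs, ← Finset.mul_prod_erase _ _ hmem,
    ← Finset.mul_prod_erase _ _ hmem, ← mul_assoc]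
  congr 1
  · have hne : σ u ≠ σ v := σ.injective.ne (Fin.castSucc_lt_succ).ne
    simp only [Equiv.Perm.mul_apply, s, Equiv.swap_apply_left, Equiv.swap_apply_right]
    rcases hne.lt_or_gt with h | h
    · rw [if_pos h, if_neg h.not_gt, mul_one, mul_comm]
    · rw [if_neg h.not_gt, if_pos h, ← pow_add, Even.neg_one_pow ⟨_, rfl⟩]
  · have swap_mapsTo : ∀ a b : Fin (n + 1), (a, b) ≠ (u, v) → a < b →
        (s a, s b) ≠ (u, v) ∧ s a < s b := by
      intro a b
      have huv : (u : ℕ) + 1 = v := rfl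
      simp only [s, Equiv.swap_apply_def, ne_eq, Prod.mk.injEq, Fin.lt_def, Fin.ext_iff]
      split_ifs <;> omega
    refine Finset.prod_nbij' (fun p => (s p.1, s p.2)) (fun p => (s p.1, s p.2)) ?_ ?_ ?_ ?_ ?_
    all_goals simp only [Finset.mem_erase, Finset.mem_filter, Finset.mem_univ, true_and,
      Equiv.swap_apply_self, implies_true, s]
    all_goals rintro ⟨a, b⟩ ⟨hab, hlt⟩
    · exact swap_mapsTo a b hab hlt
    · exact swap_mapsTo a b hab hlt
    · rfl

end KoszulSign

section Wedge

variable {V : Type*} [AddCommGroup V] [Module ℝ V] {𝒜 : ℤ → Submodule ℝ V} (G : Gerstenhaber 𝒜)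

/-- The empty wedge product is `0`, as `A` need not have a unit. -/
def wedgeList : List V → V
  | [] => 0
  | [a] => a
  | a :: b :: l => G.wedge a (wedgeList (b :: l))

theorem wedgeList_cons_of_ne_nil (a : V) {l : List V} (hl : l ≠ []) :
    wedgeList G (a :: l) = G.wedge a (wedgeList G l) := by
  obtain ⟨b, l, rfl⟩ := List.exists_cons_of_ne_nil hl
  rfl

theorem wedgeList_append {l₁ l₂ : List V} (h₁ : l₁ ≠ []) (h₂ : l₂ ≠ []) :
    wedgeList G (l₁ ++ l₂) = G.wedge (wedgeList G l₁) (wedgeList G l₂) := by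
  induction l₁ with
  | nil => exact absurd rfl h₁
  | cons a l ih =>
    rcases eq_or_ne l [] with rfl | hl
    · exact wedgeList_cons_of_ne_nil G a h₂
    · rw [List.cons_append, wedgeList_cons_of_ne_nil G a (by simp [hl]), ih hl,
        wedgeList_cons_of_ne_nil G a hl, G.wedge_assoc]

theorem wedgeList_ofFn_succ_succ {n : ℕ} (x : Fin (n + 2) → V) :
    wedgeList G (List.ofFn x) = G.wedge (x 0) (wedgeList G (List.ofFn fun i => x i.succ)) := by
  rw [List.ofFn_succ, wedgeList_cons_of_ne_nil G _ (by simp)]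

theorem wedgeList_ofFn_mem {n : ℕ} (d : Fin n → ℤ) (x : Fin n → V) (hx : ∀ i, x i ∈ 𝒜 (d i)) :
    wedgeList G (List.ofFn x) ∈ 𝒜 (∑ i, d i) := by
  induction n with
  | zero => exact zero_mem _
  | succ n ih =>
    rw [Fin.sum_univ_succ]
    cases n with
    | zero => simpa [wedgeList] using hx 0
    | succ n =>
      rw [wedgeList_ofFn_succ_succ]
      exact G.wedge_mem _ _ _ _ (hx 0) (ih _ _ fun i => hx i.succ)

theorem wedge_wedgeList_cons_comm {i j : ℤ} {a b : V} (ha : a ∈ 𝒜 i) (hb : b ∈ 𝒜 j)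
    (l : List V) :
    G.wedge a (wedgeList G (b :: l))
      = ((-1 : ℤ) ^ (i * j).natAbs) • G.wedge b (wedgeList G (a :: l)) := by
  rcases eq_or_ne l [] with rfl | hl
  · exact G.wedge_comm i j a b ha hb
  · rw [wedgeList_cons_of_ne_nil G _ hl, wedgeList_cons_of_ne_nil G _ hl, ← G.wedge_assoc,
      G.wedge_comm i j a b ha hb, map_zsmul, LinearMap.smul_apply, G.wedge_assoc]

theorem wedgeList_ofFn_comp_swap {n : ℕ} (d : Fin (n + 1) → ℤ) (x : Fin (n + 1) → V)
    (hx : ∀ i, x i ∈ 𝒜 (d i)) (i : Fin n) :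
    wedgeList G (List.ofFn (x ∘ Equiv.swap i.castSucc i.succ))
      = ((-1 : ℤ) ^ (d i.castSucc * d i.succ).natAbs) • wedgeList G (List.ofFn x) := by
  induction n with
  | zero => exact i.elim0
  | succ n ih =>
    rw [wedgeList_ofFn_succ_succ, wedgeList_ofFn_succ_succ]
    induction i using Fin.cases with
    | zero =>
      set s := Equiv.swap (0 : Fin (n + 1)).castSucc (0 : Fin (n + 1)).succ
      have h₀ : s 0 = 1 := Equiv.swap_apply_left _ _
      have h₁ : s (Fin.succ 0) = 0 := Equiv.swap_apply_right _ _
      have h₂ (j : Fin n) : s j.succ.succ = j.succ.succ :=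
        Equiv.swap_apply_of_ne_of_ne (by simp [Fin.ext_iff]) (by simp [Fin.ext_iff])
      rw [List.ofFn_succ, List.ofFn_succ]
      simp only [Function.comp_apply, h₀, h₁, h₂]
      rw [mul_comm]
      exact wedge_wedgeList_cons_comm G (hx 1) (hx 0) _
    | succ i =>
      have hswap : ∀ j : Fin (n + 1), Equiv.swap i.succ.castSucc i.succ.succ j.succ
          = (Equiv.swap i.castSucc i.succ j).succ := fun j => by
        rw [← Fin.succ_castSucc, (Fin.succ_injective _).swap_apply]
      have hzero : Equiv.swap i.succ.castSucc i.succ.succ 0 = 0 :=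
        Equiv.swap_apply_of_ne_of_ne (by simp [Fin.ext_iff]) (Fin.succ_ne_zero _).symm
      simp only [Function.comp_apply, hswap, hzero]
      rw [← map_zsmul]
      exact congrArg _ (ih (fun j => d j.succ) (fun j => x j.succ) (fun j => hx j.succ) i)

theorem wedgeList_ofFn_comp_perm {n : ℕ} (d : Fin n → ℤ) (x : Fin n → V)
    (hx : ∀ i, x i ∈ 𝒜 (d i)) (σ : Equiv.Perm (Fin n)) :
    wedgeList G (List.ofFn (x ∘ σ)) = koszulSign d σ • wedgeList G (List.ofFn x) := by
  cases n with
  | zero => simp [wedgeList]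
  | succ n =>
    induction σ using Submonoid.induction_of_closure_eq_top_right
      (Equiv.Perm.mclosure_swap_castSucc_succ n) with
    | one => rw [koszulSign_one, one_smul]; rfl
    | mul_right σ s hs ih =>
      obtain ⟨i, rfl⟩ := hs
      rw [Equiv.Perm.coe_mul, ← Function.comp_assoc,
        wedgeList_ofFn_comp_swap G (d ∘ σ) (x ∘ σ) (fun j => hx (σ j)), ih, smul_smul,
        koszulSign_mul_swap_castSucc_succ]
      rfl

theorem wedgeAll_eq_wedgeList {k : ℕ} (x : Fin (k + 1) → V) :
    wedgeAll G x = wedgeList G (List.ofFn x) := by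
  induction k with
  | zero => rfl
  | succ k ih => rw [wedgeAll, ih, wedgeList_ofFn_succ_succ]

theorem mathcalN_apply (𝒢 : ℤ → Submodule ℝ V) {n : ℕ} (d : Fin n → ℤ)
    (x : (i : Fin n) → 𝒢 (d i)) :
    mathcalN G 𝒢 n d x = wedgeList G (List.ofFn fun i => (x i : V)) := by
  cases n with
  | zero => rfl
  | succ n => exact wedgeAll_eq_wedgeList G _

end Wedge

section Unshuffles

variable {k l : ℕ}

theorem mem_unshuffles_iff {σ : Equiv.Perm (Fin (k + l))} :
    σ ∈ unshuffles k (k + l) ↔ StrictMono (σ ∘ Fin.castAdd l) ∧ StrictMono (σ ∘ Fin.natAdd k) := by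
  simp only [unshuffles, Finset.mem_filter, Finset.mem_univ, true_and]
  constructor
  · rintro ⟨h₁, h₂⟩
    exact ⟨fun i j hij => h₁ _ _ hij j.isLt, fun i j hij => h₂ _ _ (by simpa using hij) (by simp)⟩
  · rintro ⟨h₁, h₂⟩
    refine ⟨fun i j hij hj => ?_, fun i j hij hi => ?_⟩
    · exact h₁ (a := ⟨i, by omega⟩) (b := ⟨j, hj⟩) hij
    · have := h₂ (a := ⟨i - k, by omega⟩) (b := ⟨j - k, by omega⟩)
        (by simp only [Fin.lt_def] at hij ⊢; omega)
      simpa [Fin.natAdd, show k + (i - k) = i by omega, show k + (j - k) = j by omega] using this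

theorem card_compl_of_card_eq {s : Finset (Fin (k + l))} (hs : s.card = k) : sᶜ.card = l := by
  rw [Finset.card_compl, Fintype.card_fin, hs, Nat.add_sub_cancel_left]

def unshuffleOfFinset (s : Finset (Fin (k + l))) (hs : s.card = k) : Equiv.Perm (Fin (k + l)) :=
  finSumFinEquiv.symm.trans (finSumEquivOfFinset hs (card_compl_of_card_eq hs))

theorem unshuffleOfFinset_castAdd (s : Finset (Fin (k + l))) (hs : s.card = k) (i : Fin k) :
    unshuffleOfFinset s hs (Fin.castAdd l i) = s.orderEmbOfFin hs i := by
  simp [unshuffleOfFinset]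

theorem unshuffleOfFinset_natAdd (s : Finset (Fin (k + l))) (hs : s.card = k) (j : Fin l) :
    unshuffleOfFinset s hs (Fin.natAdd k j) = sᶜ.orderEmbOfFin (card_compl_of_card_eq hs) j := by
  simp [unshuffleOfFinset]

theorem unshuffleOfFinset_mem_unshuffles (s : Finset (Fin (k + l))) (hs : s.card = k) :
    unshuffleOfFinset s hs ∈ unshuffles k (k + l) := by
  rw [mem_unshuffles_iff]
  constructor
  · intro i j hij
    simpa only [Function.comp_apply, unshuffleOfFinset_castAdd] using
      (s.orderEmbOfFin hs).strictMono hij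
  · intro i j hij
    simpa only [Function.comp_apply, unshuffleOfFinset_natAdd] using
      (sᶜ.orderEmbOfFin _).strictMono hij

/-- An unshuffle is determined by the set of its first `k` values. -/
theorem unshuffleOfFinset_image {σ : Equiv.Perm (Fin (k + l))} (hσ : σ ∈ unshuffles k (k + l))
    (hs : (Finset.univ.image (σ ∘ Fin.castAdd l)).card = k) :
    unshuffleOfFinset (Finset.univ.image (σ ∘ Fin.castAdd l)) hs = σ := by
  obtain ⟨h₁, h₂⟩ := mem_unshuffles_iff.mp hσ
  refine Equiv.ext fun i => ?_
  induction i using Fin.addCases with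
  | left i =>
    rw [unshuffleOfFinset_castAdd]
    exact (congrFun (Finset.orderEmbOfFin_unique hs
      (fun i => Finset.mem_image_of_mem _ (Finset.mem_univ i)) h₁) i).symm
  | right j =>
    have hmem (j : Fin l) : (σ ∘ Fin.natAdd k) j ∈ (Finset.univ.image (σ ∘ Fin.castAdd l))ᶜ := by
      simp only [Finset.mem_compl, Finset.mem_image, Finset.mem_univ, true_and, Function.comp_apply,
        σ.injective.eq_iff, not_exists]
      intro i h
      have := congrArg Fin.val h
      simp only [Fin.val_castAdd, Fin.val_natAdd] at this
      omega
    rw [unshuffleOfFinset_natAdd]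
    exact (congrFun (Finset.orderEmbOfFin_unique _ hmem h₂) j).symm

theorem card_unshuffles : (unshuffles k (k + l)).card = (k + l).choose k := by
  rw [show (k + l).choose k = (Finset.univ.powersetCard k : Finset (Finset (Fin (k + l)))).card
    by simp]
  refine Finset.card_bij' (fun σ _ => Finset.univ.image (σ ∘ Fin.castAdd l))
    (fun s hs => unshuffleOfFinset s (Finset.mem_powersetCard.mp hs).2) (fun σ hσ => ?_)
    (fun s hs => unshuffleOfFinset_mem_unshuffles s _) (fun σ hσ => unshuffleOfFinset_image hσ _)
    (fun s hs => ?_)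
  · rw [Finset.mem_powersetCard, Finset.card_image_of_injective _
      (mem_unshuffles_iff.mp hσ).1.injective]
    simp
  · have hs' := (Finset.mem_powersetCard.mp hs).2
    rw [show unshuffleOfFinset s hs' ∘ Fin.castAdd l = s.orderEmbOfFin hs' from
      funext (unshuffleOfFinset_castAdd s hs'), Finset.image_orderEmbOfFin_univ]

end Unshuffles

section Insertion

variable {V : Type*} [AddCommGroup V] [Module ℝ V] {𝒜 : ℤ → Submodule ℝ V} (G : Gerstenhaber 𝒜)

theorem wedgeList_zero_cons (l : List V) : wedgeList G (0 :: l) = 0 := by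
  cases l with
  | nil => rfl
  | cons b l => exact LinearMap.map_zero₂ _ _

theorem wedgeList_cons_wedgeList {l₁ : List V} (h₁ : l₁ ≠ []) (l₂ : List V) :
    wedgeList G (wedgeList G l₁ :: l₂) = wedgeList G (l₁ ++ l₂) := by
  rcases eq_or_ne l₂ [] with rfl | h₂
  · rw [List.append_nil]; rfl
  · rw [wedgeList_cons_of_ne_nil G _ h₂, wedgeList_append G h₁ h₂]

theorem mathcalN_cons (𝒢 : ℤ → Submodule ℝ V) {l : ℕ} {e : ℤ} {d : Fin l → ℤ} (a : 𝒢 e)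
    (r : (j : Fin l) → 𝒢 (d j)) :
    mathcalN G 𝒢 (l + 1) (Fin.cons e d) (Fin.cons a r)
      = wedgeList G ((a : V) :: List.ofFn fun j => (r j : V)) := by
  rw [mathcalN_apply, List.ofFn_succ]
  rfl

theorem coe_prj_of_mem (𝒢 : ℤ → Submodule ℝ V) [DirectSum.Decomposition 𝒢] {i : ℤ} {v : V}
    (hv : v ∈ 𝒢 i) : (prj 𝒢 i v : V) = v :=
  DirectSum.decompose_of_mem_same 𝒢 hv

theorem insertionOp_zero_mathcalN (𝒢 : ℤ → Submodule ℝ V) [DirectSum.Decomposition 𝒢] (δ : ℤ)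
    (a j : ℕ) : insertionOp 𝒢 δ (0 : GForm 𝒢 a) (mathcalN G 𝒢 j) = 0 := by
  cases j with
  | zero => rfl
  | succ l =>
    funext d x
    refine Finset.sum_eq_zero fun σ _ => ?_
    rw [mathcalN_cons]
    simp [prj, wedgeList_zero_cons]

theorem insertionOp_mathcalN_mathcalN [DirectSum.Decomposition (negG 𝒜)] {i j : ℕ} (hi : 1 ≤ i)
    (hj : 1 ≤ j) :
    insertionOp (negG 𝒜) 0 (mathcalN G (negG 𝒜) i) (mathcalN G (negG 𝒜) j)
      = (i + j - 1).choose i • mathcalN G (negG 𝒜) (i + j - 1) := by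
  obtain ⟨k, rfl⟩ : ∃ k, i = k + 1 := ⟨i - 1, by omega⟩
  obtain ⟨l, rfl⟩ : ∃ l, j = l + 1 := ⟨j - 1, by omega⟩
  funext d x
  have term_eq : ∀ σ ∈ unshuffles (k + 1) (k + 1 + l), koszulSign d σ •
      mathcalN G (negG 𝒜) (l + 1) (Fin.cons ((∑ i, d (σ (Fin.castAdd l i))) + 0)
          fun j => d (σ (Fin.natAdd (k + 1) j)))
        (Fin.cons (prj (negG 𝒜) ((∑ i, d (σ (Fin.castAdd l i))) + 0)
            (mathcalN G (negG 𝒜) (k + 1) (fun i => d (σ (Fin.castAdd l i)))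
              fun i => x (σ (Fin.castAdd l i))))
          fun j => x (σ (Fin.natAdd (k + 1) j)))
      = mathcalN G (negG 𝒜) (k + 1 + l) d x := by
    intro σ _
    have hmem : mathcalN G (negG 𝒜) (k + 1) (fun i => d (σ (Fin.castAdd l i)))
        (fun i => x (σ (Fin.castAdd l i))) ∈ negG 𝒜 ((∑ i, d (σ (Fin.castAdd l i))) + 0) := by
      rw [mathcalN_apply, negG, add_zero, ← Finset.sum_neg_distrib]
      exact wedgeList_ofFn_mem G _ _ fun i => (x (σ (Fin.castAdd l i))).2
    have hperm := wedgeList_ofFn_comp_perm G (-d) (fun i => (x i : V)) (fun i => (x i).2) σ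
    rw [koszulSign_neg] at hperm
    have hsplit : ((List.ofFn fun i => (x (σ (Fin.castAdd l i)) : V)) ++
        List.ofFn fun j => (x (σ (Fin.natAdd (k + 1) j)) : V))
        = List.ofFn ((fun i => (x i : V)) ∘ σ) :=
      (List.ofFn_add (n := k + 1) (m := l) (f := (fun i => (x i : V)) ∘ σ)).symm
    rw [mathcalN_cons, coe_prj_of_mem _ hmem, mathcalN_apply, wedgeList_cons_wedgeList G (by simp),
      hsplit, hperm, smul_smul, koszulSign_mul_self, one_smul, mathcalN_apply]
    rfl
  show ∑ σ ∈ unshuffles (k + 1) (k + 1 + l), _ = _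
  rw [Finset.sum_congr rfl term_eq, Finset.sum_const, card_unshuffles]
  rfl

end Insertion

theorem cast_choose_eq_mul_div {i j : ℕ} (hj : 1 ≤ j) :
    ((i + j - 1).choose i : ℝ) = j * (i + j - 1).factorial / (i.factorial * j.factorial) := by
  obtain ⟨m, rfl⟩ : ∃ m, j = m + 1 := ⟨j - 1, by omega⟩
  rw [show i + (m + 1) - 1 = i + m by omega, Nat.cast_choose ℝ (Nat.le_add_right i m),
    Nat.add_sub_cancel_left, Nat.factorial_succ, Nat.cast_mul]
  field_simp

theorem cast_choose_sub_cast_choose {i j : ℕ} (hi : 1 ≤ i) (hj : 1 ≤ j) :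
    ((i + j - 1).choose i : ℝ) - ((i + j - 1).choose j : ℝ)
      = ((j : ℝ) - i) * (i + j - 1).factorial / (i.factorial * j.factorial) := by
  rw [cast_choose_eq_mul_div hj, add_comm i j, cast_choose_eq_mul_div hi, add_comm j i]
  ring

/-- `[𝒩_i, 𝒩_j]_RN = ((j-i)(i+j-1)!/(i!·j!)) 𝒩_{i+j-1}` for the wedge
product forms `𝒩_k(P_1,…,P_k) = P_1 ∧ ⋯ ∧ P_k` on the graded vector space `E` with
`E_{-k} := A^k`, for any Gerstenhaber algebra `A`. -/
theorem rnBracket_mathcalN_mathcalN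
    {V : Type*} [AddCommGroup V] [Module ℝ V] {𝒜 : ℤ → Submodule ℝ V}
    (G : Gerstenhaber 𝒜) [DirectSum.Decomposition (negG 𝒜)]
    (i j : ℕ) (hi : 1 ≤ i) (hj : 1 ≤ j) :
    rnBracketM (negG 𝒜) 0 0 (singleF (negG 𝒜) i (mathcalN G (negG 𝒜) i))
        (singleF (negG 𝒜) j (mathcalN G (negG 𝒜) j))
      = ((((j : ℝ) - (i : ℝ)) * (Nat.factorial (i + j - 1) : ℝ)) /
            ((Nat.factorial i : ℝ) * (Nat.factorial j : ℝ))) •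
          singleF (negG 𝒜) (i + j - 1) (mathcalN G (negG 𝒜) (i + j - 1)) := by
  have insert_zero (n a : ℕ) := insertionOp_zero_mathcalN G (negG 𝒜) 0 a n
  rw [rnBracketM_eq_sub, insertionM_singleF_singleF hj 0 _ _ (insert_zero j),
    insertionM_singleF_singleF hi 0 _ _ (insert_zero i), insertionOp_mathcalN_mathcalN G hi hj,
    insertionOp_mathcalN_mathcalN G hj hi, Nat.add_comm j i, singleF_smul, singleF_smul]
  rw [mul_zero, Int.natAbs_zero, pow_zero, one_smul, ← Nat.cast_smul_eq_nsmul ℝ,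
    ← Nat.cast_smul_eq_nsmul ℝ, ← sub_smul, cast_choose_sub_cast_choose hi hj]
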